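/- arXiv:1001.1113 — 5 statements merged into one kernel-verified Lean document; each statement's English description precedes it below -/
import Mathlib

section
/- The permutations r = (1 2 3 4 5 6 7 8 9 10 11) and s = (1 2 3 4 5 6 7 8 9 11 10) in S₁₁ are not conjugate in the subgroup ⟨r, s⟩ that they generate. -/
/-!
Both 11-cycles are even, so `⟨r, s⟩` lies in the alternating group. The centralizer of an
`n`-cycle in `Sₙ` is the cyclic group it generates, so any two permutations conjugating `r` to
`s` differ by a power of `r`, which is even when `n` is odd. The transposition `swap 9 10` conjugates
`r` to `s` and is odd, hence every conjugator is odd and none lies in `⟨r, s⟩`.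
-/

open Equiv Equiv.Perm

namespace Equiv.Perm

variable {α : Type*} [Fintype α] [DecidableEq α]

theorem closure_le_alternatingGroup {S : Set (Perm α)} (hS : ∀ g ∈ S, sign g = 1) :
    Subgroup.closure S ≤ alternatingGroup α :=
  (Subgroup.closure_le _).2 fun g hg => mem_alternatingGroup.2 (hS g hg)

theorem IsCycle.mem_zpowers_of_commute {c g : Perm α} (hc : c.IsCycle)
    (hsupp : c.support = Finset.univ) (h : Commute g c) : g ∈ Subgroup.zpowers c := by
  obtain ⟨hg, hmem⟩ := hc.commute_iff.mp h
  convert hmem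
  ext x
  rw [ofSubtype_subtypePerm_of_mem hg (by simp [hsupp])]

theorem IsCycle.sign_eq_of_conj_eq {r s c σ : Perm α} (hr : r.IsCycle)
    (hsupp : r.support = Finset.univ) (hsign : Perm.sign r = 1)
    (hc : c * r * c⁻¹ = s) (hσ : σ * r * σ⁻¹ = s) : Perm.sign c = Perm.sign σ := by
  have hcomm : Commute (σ⁻¹ * c) r := by
    refine mul_inv_eq_iff_eq_mul.mp ?_
    calc σ⁻¹ * c * r * (σ⁻¹ * c)⁻¹ = σ⁻¹ * (c * r * c⁻¹) * σ := by group
      _ = r := by rw [hc, ← hσ]; group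
  obtain ⟨k, hk⟩ := Subgroup.mem_zpowers_iff.mp (hr.mem_zpowers_of_commute hsupp hcomm)
  have : Perm.sign (σ⁻¹ * c) = 1 := by rw [← hk, map_zpow, hsign, one_zpow]
  rwa [map_mul, map_inv, inv_mul_eq_one, eq_comm] at this

end Equiv.Perm

theorem eleven_cycles_not_conj_in_closure :
    let r : Equiv.Perm (Fin 11) :=
      ([0, 1, 2, 3, 4, 5, 6, 7, 8, 9, 10] : List (Fin 11)).formPerm
    let s : Equiv.Perm (Fin 11) :=
      ([0, 1, 2, 3, 4, 5, 6, 7, 8, 10, 9] : List (Fin 11)).formPerm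
    ¬ ∃ c ∈ Subgroup.closure ({r, s} : Set (Equiv.Perm (Fin 11))),
        c * r * c⁻¹ = s := by
  intro r s
  rintro ⟨c, hc, hconj⟩
  have hr : r.IsCycle := List.isCycle_formPerm (by decide) (by decide)
  have hodd : sign c = -1 := by
    rw [hr.sign_eq_of_conj_eq (by decide) (by decide) hconj (σ := swap 9 10) (by decide),
      sign_swap (by decide)]
  have heven : sign c = 1 := by
    refine mem_alternatingGroup.1 (closure_le_alternatingGroup ?_ hc)
    rintro g (rfl | rfl) <;> decide +kernel
  exact absurd (hodd.symm.trans heven) (by decide)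
end

section
/- The two 11-cycles r = (1 2 3 4 5 6 7 8 9 10 11) and s = (1 2 3 4 5 6 7 8 9 11 10) generate the alternating group A₁₁. -/
/-!
The quotient `s⁻¹ r` is the 3-cycle `(9 11 10)`. The 11-cycle `r` makes `⟨r, s⟩` transitive on
eleven points, hence primitive as 11 is prime, and by Jordan's theorem a primitive permutation
group containing a 3-cycle contains the alternating group. Conversely `r` and `s` are even, being
cycles of odd length.
-/

open Equiv.Perm MulAction

theorem List.formPerm_mem_alternatingGroup {α : Type*} [Fintype α] [DecidableEq α] {l : List α}
    (hl : l.Nodup) (hodd : Odd l.length) : l.formPerm ∈ alternatingGroup α := by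
  rcases le_or_gt 2 l.length with h2 | h2
  · rw [mem_alternatingGroup, (List.isCycle_formPerm hl h2).sign,
      List.support_formPerm_of_nodup l hl (fun x hx => by simp [hx] at h2),
      List.toFinset_card_of_nodup hl, hodd.neg_one_pow, neg_neg]
  · obtain ⟨x, rfl⟩ := List.length_eq_one_iff.mp (show l.length = 1 by have := hodd.pos; omega)
    simp

namespace Equiv.Perm

variable {α : Type*} [Fintype α] [DecidableEq α] {G : Subgroup (Perm α)}

theorem isPretransitive_of_isCycle_mem_of_support_eq_univ {g : Perm α} (hg : g.IsCycle)
    (hsupp : g.support = Finset.univ) (hgG : g ∈ G) : IsPretransitive G α := by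
  refine ⟨fun x y => ?_⟩
  have hmem : ∀ z, g z ≠ z := fun z => mem_support.mp (hsupp ▸ Finset.mem_univ z)
  obtain ⟨i, hi⟩ := hg.exists_pow_eq (hmem x) (hmem y)
  exact ⟨⟨g ^ i, pow_mem hgG i⟩, hi⟩

theorem alternatingGroup_le_of_prime_card_of_isCycle_mem_of_isThreeCycle_mem
    (hp : (Fintype.card α).Prime) {g h : Perm α} (hg : g.IsCycle)
    (hsupp : g.support = Finset.univ) (hgG : g ∈ G) (h3 : h.IsThreeCycle) (hhG : h ∈ G) :
    alternatingGroup α ≤ G :=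
  have := isPretransitive_of_isCycle_mem_of_support_eq_univ hg hsupp hgG
  alternatingGroup_le_of_isPreprimitive_of_isThreeCycle_mem
    (IsPreprimitive.of_prime_card (Nat.card_eq_fintype_card (α := α) ▸ hp)) h3 hhG

end Equiv.Perm

theorem eleven_cycles_generate_A11 :
    let r : Equiv.Perm (Fin 11) :=
      ([0, 1, 2, 3, 4, 5, 6, 7, 8, 9, 10] : List (Fin 11)).formPerm
    let s : Equiv.Perm (Fin 11) :=
      ([0, 1, 2, 3, 4, 5, 6, 7, 8, 10, 9] : List (Fin 11)).formPerm
    Subgroup.closure ({r, s} : Set (Equiv.Perm (Fin 11)))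
      = alternatingGroup (Fin 11) := by
  intro r s
  have hr : r ∈ Subgroup.closure {r, s} := Subgroup.subset_closure (Set.mem_insert r {s})
  have hs : s ∈ Subgroup.closure {r, s} := Subgroup.subset_closure (Set.mem_insert_of_mem r rfl)
  have hsupp : r.support = Finset.univ := by decide
  have h3 : (s⁻¹ * r).IsThreeCycle := by
    rw [← card_support_eq_three_iff]
    decide
  refine le_antisymm ?_ ?_
  · rw [Subgroup.closure_le, Set.insert_subset_iff, Set.singleton_subset_iff]
    exact ⟨List.formPerm_mem_alternatingGroup (by decide) (by decide),
      List.formPerm_mem_alternatingGroup (by decide) (by decide)⟩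
  · exact alternatingGroup_le_of_prime_card_of_isCycle_mem_of_isThreeCycle_mem
      (by norm_num) (List.isCycle_formPerm (by decide) (by decide)) hsupp hr h3
      (mul_mem (inv_mem hs) hr)
end

section
/- Let G and H be groups, and suppose the conjugacy class of h in H is of type D, witnessed by s ∈ O_h^H with (hs)² ≠ (sh)² and h, s not conjugate in ⟨h, s⟩. Then for any g ∈ G, the conjugacy class of (g, h) in G × H is of type D. -/
/-- The conjugacy class of `r` is of type D: there is a conjugate `s` of `r`
with `(rs)² ≠ (sr)²` such that `r` and `s` are not conjugate in `⟨r, s⟩`. -/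
def IsTypeD {K : Type*} [Group K] (r : K) : Prop :=
  ∃ s : K, IsConj r s ∧ (r * s) ^ 2 ≠ (s * r) ^ 2 ∧
    ¬ ∃ c ∈ Subgroup.closure ({r, s} : Set K), c * r * c⁻¹ = s

theorem IsConj.prodMk_left {G H : Type*} [Group G] [Group H] (g : G) {h s : H}
    (hc : IsConj h s) : IsConj ((g, h) : G × H) (g, s) := by
  obtain ⟨c, hc⟩ := isConj_iff.mp hc
  exact isConj_iff.mpr ⟨(1, c), by simp [hc]⟩

theorem not_exists_conj_mem_closure_pair_of_map {K L : Type*} [Group K] [Group L] (f : K →* L)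
    {r s : K} (hf : ¬ ∃ c ∈ Subgroup.closure ({f r, f s} : Set L), c * f r * c⁻¹ = f s) :
    ¬ ∃ c ∈ Subgroup.closure ({r, s} : Set K), c * r * c⁻¹ = s := by
  rintro ⟨c, hc, hcrs⟩
  refine hf ⟨f c, ?_, by rw [← map_inv, ← map_mul, ← map_mul, hcrs]⟩
  rw [← Set.image_pair, ← MonoidHom.map_closure]
  exact Subgroup.mem_map_of_mem f hc

theorem typeD_prod_of_typeD_right {G H : Type*} [Group G] [Group H]
    (h s : H) (hconj : IsConj h s) (hne : (h * s) ^ 2 ≠ (s * h) ^ 2)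
    (hnc : ¬ ∃ c ∈ Subgroup.closure ({h, s} : Set H), c * h * c⁻¹ = s)
    (g : G) :
    IsTypeD ((g, h) : G × H) :=
  ⟨(g, s), hconj.prodMk_left g, fun hsq => hne (congrArg Prod.snd hsq),
    not_exists_conj_mem_closure_pair_of_map (MonoidHom.snd G H) hnc⟩
end

section
/- In the alternating group A_n (n ≥ 5), the conjugacy class of a 3-cycle is not of type D: for any two 3-cycles r, s that are conjugate in A_n, either (rs)² = (sr)² or r is conjugate to s in ⟨r, s⟩. -/
/-!
Write `r = (p b c)` and `s = (p e g)` from a common point `p` of their supports (if there is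
none, `r` and `s` commute). Up to rotating the two cycles there are three configurations:
sharing an edge `p ↦ b` traversed the same way, `(rs)² = (sr)²`; sharing the edge `{p, c}`
traversed in opposite directions, `rsr = srs`, so `rs` conjugates `r` to `s`; sharing only `p`,
`(rs)²r = s(rs)²`, so `(rs)²` conjugates `r` to `s`. Sharing all three points means `s = r^{±1}`.
-/

open Equiv Equiv.Perm

/-- The pair `(r, s)` does not witness that the conjugacy class of `r` is of type D. -/
def NotTypeDPair {G : Type*} [Group G] (r s : G) : Prop :=
  (r * s) ^ 2 = (s * r) ^ 2 ∨ ∃ c ∈ Subgroup.closure ({r, s} : Set G), c * r * c⁻¹ = s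

namespace NotTypeDPair

variable {G : Type*} [Group G] {r s : G}

theorem of_commute (h : Commute r s) : NotTypeDPair r s :=
  Or.inl (by rw [h.eq])

theorem of_mul_pow_mul_eq (k : ℕ) (h : (r * s) ^ k * r = s * (r * s) ^ k) :
    NotTypeDPair r s := by
  have hr : r ∈ Subgroup.closure ({r, s} : Set G) := Subgroup.subset_closure (by simp)
  have hs : s ∈ Subgroup.closure ({r, s} : Set G) := Subgroup.subset_closure (by simp)
  exact Or.inr ⟨(r * s) ^ k, pow_mem (mul_mem hr hs) k, by rw [h, mul_inv_cancel_right]⟩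

end NotTypeDPair

section ThreeCycles

variable {α : Type*} [DecidableEq α]

theorem notTypeDPair_formPerm_of_same_edge {p b c g : α} (h : [p, b, c, g].Nodup) :
    NotTypeDPair [p, b, c].formPerm [p, b, g].formPerm := by
  refine Or.inl ?_
  simp only [List.nodup_cons, List.mem_cons, List.not_mem_nil] at h
  ext x
  simp only [List.formPerm_cons_cons, List.formPerm_singleton, pow_two, mul_one,
    Perm.mul_apply, swap_apply_def]
  grind

theorem notTypeDPair_formPerm_of_reversed_edge {p b c g : α} (h : [p, b, c, g].Nodup) :
    NotTypeDPair [p, b, c].formPerm [p, c, g].formPerm := by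
  refine .of_mul_pow_mul_eq 1 ?_
  simp only [List.nodup_cons, List.mem_cons, List.not_mem_nil] at h
  ext x
  simp only [List.formPerm_cons_cons, List.formPerm_singleton, pow_one, mul_one,
    Perm.mul_apply, swap_apply_def]
  grind

theorem notTypeDPair_formPerm_of_common_point {p b c e g : α} (h : [p, b, c, e, g].Nodup) :
    NotTypeDPair [p, b, c].formPerm [p, e, g].formPerm := by
  refine .of_mul_pow_mul_eq 2 ?_
  simp only [List.nodup_cons, List.mem_cons, List.not_mem_nil] at h
  ext x
  simp only [List.formPerm_cons_cons, List.formPerm_singleton, pow_two, mul_one,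
    Perm.mul_apply, swap_apply_def]
  grind

theorem notTypeDPair_formPerm {p b c e g : α} (hr : [p, b, c].Nodup) (hs : [p, e, g].Nodup) :
    NotTypeDPair [p, b, c].formPerm [p, e, g].formPerm := by
  by_cases heb : e = b
  · subst e
    by_cases hgc : g = c
    · subst g
      exact .of_commute (.refl _)
    · exact notTypeDPair_formPerm_of_same_edge (by grind)
  by_cases hec : e = c
  · subst e
    by_cases hgb : g = b
    · subst g
      have hinv : [p, c, b].formPerm = [p, b, c].formPerm⁻¹ := by
        rw [← List.formPerm_reverse, ← List.formPerm_rotate _ hs 1]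
        rfl
      exact hinv ▸ .of_commute ((Commute.refl _).inv_right)
    · exact notTypeDPair_formPerm_of_reversed_edge (by grind)
  by_cases hgb : g = b
  · subst g
    -- `(p b c) = (b c p)` and `(p e b) = (b p e)`
    rw [← List.formPerm_rotate _ hr 1, ← List.formPerm_rotate _ hs 2]
    exact notTypeDPair_formPerm_of_reversed_edge (p := b) (b := c) (c := p) (by grind)
  by_cases hgc : g = c
  · subst g
    -- `(p b c) = (c p b)` and `(p e c) = (c p e)`
    rw [← List.formPerm_rotate _ hr 2, ← List.formPerm_rotate _ hs 2]
    exact notTypeDPair_formPerm_of_same_edge (p := c) (b := p) (c := b) (by grind)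
  exact notTypeDPair_formPerm_of_common_point (by grind)

theorem Equiv.Perm.IsThreeCycle.notTypeDPair [Fintype α] {r s : Perm α} (hr : r.IsThreeCycle)
    (hs : s.IsThreeCycle) : NotTypeDPair r s := by
  by_cases hd : _root_.Disjoint r.support s.support
  · exact .of_commute (disjoint_iff_disjoint_support.mpr hd).commute
  obtain ⟨p, hpr, hps⟩ := Finset.not_disjoint_iff.mp hd
  have hr' : r = [p, r p, r (r p)].formPerm := by
    simpa [List.formPerm_cons_cons] using hr.eq_swap_mul_swap_iff_mem_support.mpr hpr
  have hs' : s = [p, s p, s (s p)].formPerm := by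
    simpa [List.formPerm_cons_cons] using hs.eq_swap_mul_swap_iff_mem_support.mpr hps
  rw [hr', hs']
  exact notTypeDPair_formPerm (hr.nodup_iff_mem_support.mpr hpr)
    (hs.nodup_iff_mem_support.mpr hps)

end ThreeCycles

theorem three_cycles_not_typeD_general (n : ℕ)
    (r s : Equiv.Perm (Fin n))
    (hr : r.IsThreeCycle) (hs : s.IsThreeCycle) :
    (r * s) ^ 2 = (s * r) ^ 2 ∨
      ∃ c ∈ Subgroup.closure ({r, s} : Set (Equiv.Perm (Fin n))),
        c * r * c⁻¹ = s :=
  hr.notTypeDPair hs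

theorem three_cycles_not_typeD (n : ℕ) (hn : 5 ≤ n)
    (r s : Equiv.Perm (Fin n))
    (hr : r.IsThreeCycle) (hs : s.IsThreeCycle)
    (hconj : ∃ c ∈ alternatingGroup (Fin n), c * r * c⁻¹ = s) :
    (r * s) ^ 2 = (s * r) ^ 2 ∨
      ∃ c ∈ Subgroup.closure ({r, s} : Set (Equiv.Perm (Fin n))),
        c * r * c⁻¹ = s :=
  three_cycles_not_typeD_general n r s hr hs
end

section
/- Let G = H × K be a direct product of groups and (h, k) ∈ G. If the conjugacy class of h in H is of type D, then the conjugacy class of (h, k) in G is of type D, witnessed by (h', k) where h' is the witness for h. -/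
theorem IsConj.prodMk {M N : Type*} [Monoid M] [Monoid N] {a b : M} {c d : N}
    (hab : IsConj a b) (hcd : IsConj c d) : IsConj (a, c) (b, d) := by
  obtain ⟨u, hu⟩ := hab
  obtain ⟨v, hv⟩ := hcd
  exact ⟨MulEquiv.prodUnits.symm (u, v), Prod.ext hu hv⟩

theorem Subgroup.exists_conj_mem_closure_image {G N : Type*} [Group G] [Group N] (f : G →* N)
    {s : Set G} {a b : G} (hconj : ∃ c ∈ Subgroup.closure s, c * a * c⁻¹ = b) :
    ∃ c ∈ Subgroup.closure (f '' s), c * f a * c⁻¹ = f b := by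
  obtain ⟨c, hc, rfl⟩ := hconj
  refine ⟨f c, ?_, by simp⟩
  rw [← MonoidHom.map_closure]
  exact Subgroup.mem_map_of_mem f hc

theorem typeD_witness_in_product {H K : Type*} [Group H] [Group K]
    (h h' : H) (k : K)
    (hconj : IsConj h h') (hne : (h * h') ^ 2 ≠ (h' * h) ^ 2)
    (hnc : ¬ ∃ c ∈ Subgroup.closure ({h, h'} : Set H), c * h * c⁻¹ = h') :
    IsConj ((h, k) : H × K) (h', k) ∧
      ((h, k) * (h', k)) ^ 2 ≠ ((h', k) * (h, k)) ^ 2 ∧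
      ¬ ∃ c ∈ Subgroup.closure ({(h, k), (h', k)} : Set (H × K)),
          c * (h, k) * c⁻¹ = (h', k) := by
  refine ⟨hconj.prodMk (IsConj.refl k), fun hsq => hne (congrArg Prod.fst hsq), fun hc => hnc ?_⟩
  simpa [Set.image_pair] using Subgroup.exists_conj_mem_closure_image (MonoidHom.fst H K) hc
end
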